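/- arXiv:2211.03682 — 4 statements merged into one kernel-verified Lean document; each statement's English description precedes it below -/
import Mathlib

section
/- Let F be a field, A a finite subset of F, and P a nonzero polynomial in t variables over F of total degree d. Then the number of tuples (r_1, ..., r_t) in A^t with P(r_1, ..., r_t) = 0 is at most d * |A|^(t-1). -/
open Finset Fintype

namespace MvPolynomial

lemma filter_eval_eq_zero_eq_empty_of_isEmpty {σ R : Type*} [IsEmpty σ] [CommSemiring R]
    [DecidableEq R] {p : MvPolynomial σ R} (hp : p ≠ 0) (s : Finset (σ → R)) :
    {x ∈ s | eval x p = 0} = ∅ := by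
  refine filter_false_of_mem fun x _ hx ↦ hp ?_
  rw [p.eq_C_of_isEmpty, eval_C] at hx
  rw [p.eq_C_of_isEmpty, hx, C_0]

variable {R : Type*} [CommRing R] [IsDomain R] [DecidableEq R]

/-- `schwartz_zippel_totalDegree` with the denominators cleared; at `n = 0` the truncated
exponent `n - 1 = 0` is harmless because the zero set is empty. -/
theorem card_filter_piFinset_eval_eq_zero_le {n : ℕ} {p : MvPolynomial (Fin n) R} (hp : p ≠ 0)
    (S : Finset R) :
    #{x ∈ piFinset fun _ ↦ S | eval x p = 0} ≤ p.totalDegree * #S ^ (n - 1) := by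
  cases n with
  | zero => simp [filter_eval_eq_zero_eq_empty_of_isEmpty hp]
  | succ k =>
    obtain rfl | hS := S.eq_empty_or_nonempty
    · simp
    have h := schwartz_zippel_totalDegree hp S
    rw [div_le_div_iff₀ (by positivity) (by positivity), pow_succ, ← mul_assoc] at h
    exact_mod_cast le_of_mul_le_mul_right h (by positivity)

end MvPolynomial

/-- Schwartz-Zippel lemma (counting form): if `P` is a nonzero polynomial in `t`
variables over a field `F` of total degree `d`, and `A ⊆ F` is finite, then the
number of tuples in `A^t` on which `P` vanishes is at most `d * |A|^(t-1)`. -/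
theorem schwartz_zippel_count (F : Type*) [Field F] [DecidableEq F] (t : ℕ)
    (A : Finset F) (P : MvPolynomial (Fin t) F) (hP : P ≠ 0) :
    ((Fintype.piFinset (fun _ : Fin t => A)).filter
        (fun r : Fin t → F => MvPolynomial.eval r P = 0)).card
      ≤ P.totalDegree * A.card ^ (t - 1) :=
  MvPolynomial.card_filter_piFinset_eval_eq_zero_le hP A
end

section
/- Let q be a prime power, n, m, t, ℓ positive integers with m ≤ t, m < q, and s a nonnegative integer. If C(ℓ+s, t) * (m/q)^n < s + 1, then there exists a sequence S of length ℓ over F_q^n such that every subsequence S' of S of length t satisfies e_m(S') ≠ 0 in F_q^n. -/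
/-!
Choose `W : Fin (ℓ + s) → F^n` uniformly at random. For a fixed `t`-subset `A`, `e_m` of the
subsequence `W|_A` vanishes iff each of its `n` coordinates does, and in every coordinate this
is the vanishing of a nonzero polynomial of degree `m`, which by Schwartz–Zippel has probability
at most `m / q`. So the expected number of bad `t`-subsets is at most `C(ℓ+s, t) (m/q)^n < s + 1`,
and some `W` has at most `s` of them. Deleting one position from each bad subset leaves at least
`ℓ` positions on which no `t`-subsequence is bad.
-/

open Finset MvPolynomial

theorem map_multiset_esymm {R S F : Type*} [CommSemiring R] [CommSemiring S] [FunLike F R S]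
    [RingHomClass F R S] (φ : F) (s : Multiset R) (n : ℕ) :
    φ (s.esymm n) = (s.map φ).esymm n := by
  simp [Multiset.esymm, map_multiset_sum, map_multiset_prod, Multiset.powersetCard_map,
    Multiset.map_map]

section Polynomial

variable {σ R : Type*} [CommSemiring R]

theorem multiset_esymm_map_X_eq_rename (A : Finset σ) (m : ℕ) :
    (A.val.map (X : σ → MvPolynomial σ R)).esymm m = rename (↑) (esymm A R m) := by
  conv_lhs => rw [← Finset.attach_map_val (s := A), Finset.map_val, Multiset.map_map]
  rw [esymm_eq_multiset_esymm, map_multiset_esymm, Multiset.map_map, univ_eq_attach]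
  simp only [Function.comp_def, rename_X, Function.Embedding.subtype_apply]

variable [Nontrivial R]

theorem multiset_esymm_map_X_ne_zero {A : Finset σ} {m : ℕ} (hm : 0 < m) (hmA : m ≤ #A) :
    (A.val.map (X : σ → MvPolynomial σ R)).esymm m ≠ 0 := by
  rw [multiset_esymm_map_X_eq_rename, ne_eq,
    map_eq_zero_iff _ (rename_injective _ Subtype.val_injective)]
  intro h
  have hdeg := degrees_esymm (σ := A) (R := R) hm (by simpa using hmA)
  rw [h, degrees_zero] at hdeg
  have hcard := congrArg Multiset.card hdeg
  rw [univ_eq_attach, attach_val, Multiset.card_attach] at hcard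
  change 0 = #A at hcard
  omega

theorem totalDegree_multiset_esymm_map_X_le (A : Finset σ) (m : ℕ) :
    ((A.val.map (X : σ → MvPolynomial σ R)).esymm m).totalDegree ≤ m := by
  rw [esymm_map_val]
  refine (totalDegree_finsetSum _ _).trans (Finset.sup_le fun c hc => ?_)
  refine (totalDegree_finsetProd _ _).trans ?_
  simp [totalDegree_X, (mem_powersetCard.1 hc).2]

end Polynomial

section Counting

variable {R : Type*} [CommRing R] [IsDomain R] [Fintype R] [DecidableEq R] {N m : ℕ}
  {A : Finset (Fin N)}

theorem card_esymm_eq_zero_le (hm : 0 < m) (hmA : m ≤ #A) :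
    (#{x : Fin N → R | (A.val.map x).esymm m = 0} : ℝ) ≤
      m / Fintype.card R * Fintype.card R ^ N := by
  have heval (x : Fin N → R) : eval x ((A.val.map X).esymm m) = (A.val.map x).esymm m := by
    simp only [map_multiset_esymm, Multiset.map_map, Function.comp_def, eval_X]
  have hSZ := schwartz_zippel_totalDegree (multiset_esymm_map_X_ne_zero (R := R) hm hmA) univ
  simp only [Fintype.piFinset_univ, heval, card_univ] at hSZ
  have hq : (0 : ℚ≥0) < Fintype.card R ^ N := by positivity
  have hle : (#{x : Fin N → R | (A.val.map x).esymm m = 0} : ℚ≥0) ≤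
      m / Fintype.card R * Fintype.card R ^ N :=
    calc _ ≤ (((A.val.map X).esymm m).totalDegree / Fintype.card R * Fintype.card R ^ N :
            ℚ≥0) := (div_le_iff₀ hq).1 hSZ
      _ ≤ _ := by
        gcongr
        exact totalDegree_multiset_esymm_map_X_le A m
  simpa using (NNRat.cast_le (K := ℝ)).2 hle

theorem card_filter_forall_apply_eq_pow {σ ι α : Type*} [Fintype σ] [DecidableEq σ] [Fintype ι]
    [DecidableEq ι] [Fintype α] (P : (σ → α) → Prop) [DecidablePred P] :
    #{W : σ → ι → α | ∀ j, P (fun i => W i j)} = #{x | P x} ^ Fintype.card ι := by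
  have e : {W : σ → ι → α // ∀ j, P (fun i => W i j)} ≃ (ι → {x : σ → α // P x}) :=
    ((Equiv.piComm _).subtypeEquiv fun _ => Iff.rfl).trans Equiv.subtypePiEquivPi
  simp only [← Fintype.card_subtype]
  rw [Fintype.card_congr e, Fintype.card_pi, prod_const, card_univ]

theorem card_esymm_pi_eq_zero_le {ι : Type*} [Fintype ι] [DecidableEq ι] (hm : 0 < m)
    (hmA : m ≤ #A) :
    (#{W : Fin N → ι → R | (A.val.map W).esymm m = 0} : ℝ) ≤
      (m / Fintype.card R) ^ Fintype.card ι * Fintype.card (Fin N → ι → R) := by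
  have hcoord (W : Fin N → ι → R) :
      (A.val.map W).esymm m = 0 ↔ ∀ j, (A.val.map fun i => W i j).esymm m = 0 := by
    refine funext_iff.trans (forall_congr' fun j => ?_)
    have := map_multiset_esymm (Pi.evalRingHom (fun _ : ι => R) j) (A.val.map W) m
    simp only [Pi.evalRingHom_apply, Multiset.map_map, Function.comp_def] at this
    rw [Pi.zero_apply, this]
  calc (#{W : Fin N → ι → R | (A.val.map W).esymm m = 0} : ℝ)
      = (#{x : Fin N → R | (A.val.map x).esymm m = 0} : ℝ) ^ Fintype.card ι := by
        rw [filter_congr fun W _ => hcoord W]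
        exact_mod_cast card_filter_forall_apply_eq_pow (ι := ι)
          fun x : Fin N → R => (A.val.map x).esymm m = 0
    _ ≤ (m / Fintype.card R * Fintype.card R ^ N : ℝ) ^ Fintype.card ι :=
        pow_le_pow_left₀ (by positivity) (card_esymm_eq_zero_le hm hmA) _
    _ = _ := by
        rw [Fintype.card_fun, Fintype.card_fun, Fintype.card_fin]
        push_cast
        ring

end Counting

theorem exists_card_filter_le_of_forall_card_filter_le {Ω β : Type*} [Fintype Ω] [Nonempty Ω]
    (𝒜 : Finset β) (bad : Ω → β → Prop) [∀ ω A, Decidable (bad ω A)] (p : ℝ) (s : ℕ)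
    (hbad : ∀ A ∈ 𝒜, (#{ω | bad ω A} : ℝ) ≤ p * Fintype.card Ω) (h : #𝒜 * p < s + 1) :
    ∃ ω, #{A ∈ 𝒜 | bad ω A} ≤ s := by
  have hΩ : (0 : ℝ) < Fintype.card Ω := by exact_mod_cast Fintype.card_pos
  have hsum : ∑ ω, (#{A ∈ 𝒜 | bad ω A} : ℝ) < ∑ _ω : Ω, ((s : ℝ) + 1) :=
    calc ∑ ω, (#{A ∈ 𝒜 | bad ω A} : ℝ) = ∑ A ∈ 𝒜, (#{ω | bad ω A} : ℝ) := by
          exact_mod_cast sum_card_bipartiteAbove_eq_sum_card_bipartiteBelow bad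
      _ ≤ ∑ _A ∈ 𝒜, p * Fintype.card Ω := sum_le_sum hbad
      _ = #𝒜 * p * Fintype.card Ω := by rw [sum_const, nsmul_eq_mul, mul_assoc]
      _ < (s + 1) * Fintype.card Ω := mul_lt_mul_of_pos_right h hΩ
      _ = ∑ _ω : Ω, ((s : ℝ) + 1) := by rw [sum_const, card_univ, nsmul_eq_mul, mul_comm]
  obtain ⟨ω, -, hω⟩ := exists_lt_of_sum_lt hsum
  exact ⟨ω, Nat.lt_succ_iff.1 (by exact_mod_cast hω)⟩

theorem exists_orderEmbedding_forall_not_subset_range {α : Type*} [Fintype α] [LinearOrder α]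
    {ℓ : ℕ} (B : Finset (Finset α)) (hB : ∀ A ∈ B, A.Nonempty)
    (hcard : ℓ + #B ≤ Fintype.card α) :
    ∃ e : Fin ℓ ↪o α, ∀ A ∈ B, ¬ (A : Set α) ⊆ Set.range e := by
  choose a ha using hB
  set D := B.attach.image fun A => a A.1 A.2
  have hG : ℓ ≤ #(univ \ D) := by
    rw [card_sdiff_of_subset (subset_univ _), card_univ]
    have : #D ≤ #B := card_image_le.trans_eq card_attach
    omega
  obtain ⟨G, hGsub, hGcard⟩ := exists_subset_card_eq hG
  refine ⟨G.orderEmbOfFin hGcard, fun A hA hAsub => ?_⟩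
  obtain ⟨i, hi⟩ := hAsub (ha A hA)
  have : a A hA ∈ G := hi ▸ G.orderEmbOfFin_mem hGcard i
  exact (mem_sdiff.1 (hGsub this)).2 (mem_image_of_mem _ (mem_attach B ⟨A, hA⟩))

theorem expurgation_lower_bound_general (q n m t ℓ s : ℕ) (hm : 0 < m) (hmt : m ≤ t)
    (F : Type*) [Field F] [Fintype F] (hF : Fintype.card F = q)
    (h : ((ℓ + s).choose t : ℝ) * ((m : ℝ) / q) ^ n < s + 1) :
    ∃ S : Fin ℓ → (Fin n → F), ∀ f : Fin t → Fin ℓ, StrictMono f →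
      (∑ c ∈ Finset.powersetCard m (Finset.univ : Finset (Fin t)),
        ∏ i ∈ c, S (f i)) ≠ 0 := by
  classical
  subst hF
  obtain ⟨W, hW⟩ := exists_card_filter_le_of_forall_card_filter_le
    (powersetCard t (univ : Finset (Fin (ℓ + s))))
    (fun (W : Fin (ℓ + s) → Fin n → F) A => (A.val.map W).esymm m = 0) _ s
    (fun A hA => by
      simpa using card_esymm_pi_eq_zero_le (R := F) (ι := Fin n) hm
        (hmt.trans (mem_powersetCard.1 hA).2.ge))
    (by simpa using h)
  obtain ⟨e, he⟩ := exists_orderEmbedding_forall_not_subset_range (ℓ := ℓ)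
    {A ∈ powersetCard t (univ : Finset (Fin (ℓ + s))) | (A.val.map W).esymm m = 0}
    (fun A hA => card_pos.1 <| by
      rw [(mem_powersetCard.1 (mem_filter.1 hA).1).2]; omega)
    (by simpa using hW)
  refine ⟨W ∘ e, fun f hf hzero => ?_⟩
  let g : Fin t ↪ Fin (ℓ + s) := ⟨e ∘ f, (e.strictMono.comp hf).injective⟩
  refine he (univ.map g) (mem_filter.2 ⟨mem_powersetCard_univ.2 (by simp), ?_⟩) ?_
  · rwa [map_val, Multiset.map_map, esymm_map_val]
  · rintro _ hx
    obtain ⟨i, -, rfl⟩ := mem_map.1 hx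
    exact ⟨f i, rfl⟩

/-- Expurgation lower bound: if `C(ℓ+s, t) * (m/q)^n < s + 1`, then there is a sequence
of length `ℓ` over `F_q^n` in which every subsequence of length `t` has `e_m ≠ 0`. -/
theorem expurgation_lower_bound (q n m t ℓ s : ℕ) (hq : IsPrimePow q)
    (hn : 0 < n) (hm : 0 < m) (ht : 0 < t) (hℓ : 0 < ℓ) (hmt : m ≤ t) (hmq : m < q)
    (F : Type*) [Field F] [Fintype F] (hF : Fintype.card F = q)
    (h : ((ℓ + s).choose t : ℝ) * ((m : ℝ) / q) ^ n < s + 1) :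
    ∃ S : Fin ℓ → (Fin n → F), ∀ f : Fin t → Fin ℓ, StrictMono f →
      (∑ c ∈ Finset.powersetCard m (Finset.univ : Finset (Fin t)),
        ∏ i ∈ c, S (f i)) ≠ 0 :=
  expurgation_lower_bound_general q n m t ℓ s hm hmt F hF h
end

section
/- Let q = 3^k with k ≥ 1, let n ≥ 1, and fix 0 ≤ j ≤ n. Let S ⊆ F_q^n be a set of vectors, each having exactly j zero coordinates, such that for all pairwise distinct x, y, z ∈ S one has xy + yz + zx ≠ 0 in the ring F_q^n. Define P(x,y,z) = Π_{i=1}^n (1 - (x_i y_i + y_i z_i + z_i x_i)^{q-1}) as a function S × S × S → F_q. Then P(x,y,z) ≠ 0 if and only if x = y = z. -/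
/-!
Each factor `1 - a ^ (q - 1)` of `P` is nonzero exactly when `a = 0`, so `P(x, y, z) ≠ 0` means
`xy + yz + zx = 0` in `F_q^n`. On the diagonal this is `3x² = 0`. Off the diagonal, distinct
triples are excluded by hypothesis, and if exactly two of the points agree, say `x = y ≠ z`, then
in characteristic `3` we get `x² + 2xz = x(x - z)`; since `x` and `z` have the same number of
zeros, some coordinate has `xᵢ ≠ 0` and `xᵢ ≠ zᵢ`, where this product does not vanish.
-/

open Finset

theorem FiniteField.one_sub_pow_card_sub_one_ne_zero_iff {K : Type*} [Field K] [Fintype K]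
    (a : K) : 1 - a ^ (Fintype.card K - 1) ≠ 0 ↔ a = 0 := by
  by_cases ha : a = 0
  · have hq : Fintype.card K - 1 ≠ 0 := by have := Fintype.one_lt_card (α := K); omega
    simp [ha, zero_pow hq]
  · simp [FiniteField.pow_card_sub_one_eq_one a ha, ha]

theorem exists_ne_zero_ne_of_card_filter_eq_zero_eq {ι M : Type*} [Fintype ι] [Zero M]
    [DecidableEq M] {x z : ι → M} (hxz : x ≠ z)
    (hcard : #{i | x i = 0} = #{i | z i = 0}) : ∃ i, x i ≠ 0 ∧ x i ≠ z i := by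
  by_contra! h
  have hsub : univ.filter (fun i => z i = 0) ⊆ univ.filter (fun i => x i = 0) := by
    intro i
    simp only [mem_filter, mem_univ, true_and]
    intro hz
    by_contra hx
    exact hx (h i hx ▸ hz)
  have hzeros := eq_of_subset_of_card_le hsub hcard.le
  refine hxz (funext fun i => ?_)
  by_cases hx : x i = 0
  · have : i ∈ univ.filter (fun i => z i = 0) := hzeros ▸ by simpa using hx
    rw [hx, (by simpa using this : z i = 0)]
  · exact h i hx

theorem mul_self_add_mul_add_mul_ne_zero {ι R : Type*} [Fintype ι] [CommRing R] [IsDomain R]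
    [DecidableEq R] (h3 : (3 : R) = 0) {x z : ι → R} (hxz : x ≠ z)
    (hcard : #{i | x i = 0} = #{i | z i = 0}) : x * x + x * z + z * x ≠ 0 := by
  obtain ⟨i, hx, hne⟩ := exists_ne_zero_ne_of_card_filter_eq_zero_eq hxz hcard
  intro h
  have hi : x i * x i + x i * z i + z i * x i = 0 := congrFun h i
  -- `2 = -1` in characteristic `3`
  have : x i * (x i - z i) = 0 := by linear_combination hi - x i * z i * h3
  exact mul_ne_zero hx (sub_ne_zero.mpr hne) this

theorem slice_rank_polynomial_diag_general (k n j : ℕ)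
    (F : Type*) [Field F] [Fintype F] [DecidableEq F] (hF : Fintype.card F = 3 ^ k)
    (S : Set (Fin n → F))
    (hzero : ∀ v ∈ S, ((Finset.univ : Finset (Fin n)).filter (fun i => v i = 0)).card = j)
    (hS : ∀ x ∈ S, ∀ y ∈ S, ∀ z ∈ S, x ≠ y → y ≠ z → x ≠ z →
      x * y + y * z + z * x ≠ 0) :
    ∀ x ∈ S, ∀ y ∈ S, ∀ z ∈ S,
      ((∏ i : Fin n, (1 - (x i * y i + y i * z i + z i * x i) ^ (3 ^ k - 1))) ≠ (0 : F)
        ↔ (x = y ∧ y = z)) := by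
  have h3 : (3 : F) = 0 := eq_zero_of_pow_eq_zero (n := k) <| by
    exact_mod_cast hF ▸ FiniteField.cast_card_eq_zero F
  have hcard : ∀ v ∈ S, ∀ w ∈ S, #{i | v i = 0} = #{i | w i = 0} := fun v hv w hw =>
    (hzero v hv).trans (hzero w hw).symm
  intro x hx y hy z hz
  simp only [← hF, prod_ne_zero_iff, mem_univ, forall_const,
    FiniteField.one_sub_pow_card_sub_one_ne_zero_iff]
  suffices x * y + y * z + z * x = 0 ↔ x = y ∧ y = z by simpa [funext_iff] using this
  constructor
  · intro h
    by_contra! hne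
    by_cases hxy : x = y
    · subst hxy
      exact mul_self_add_mul_add_mul_ne_zero h3 (hne rfl) (hcard x hx z hz) h
    by_cases hyz : y = z
    · subst hyz
      refine mul_self_add_mul_add_mul_ne_zero h3 (Ne.symm hxy) (hcard y hy x hx) ?_
      linear_combination h
    by_cases hxz : x = z
    · subst hxz
      refine mul_self_add_mul_add_mul_ne_zero h3 hxy (hcard x hx y hy) ?_
      linear_combination h
    exact hS x hx y hy z hz hxy hyz hxz h
  · rintro ⟨rfl, rfl⟩
    ext i
    simp only [Pi.add_apply, Pi.mul_apply, Pi.zero_apply]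
    linear_combination x i * x i * h3

/-- Lemma 4.8: let `q = 3^k` and let `S ⊆ F_q^n` consist of vectors with exactly `j`
zero coordinates such that `xy + yz + zx ≠ 0` for all pairwise distinct `x, y, z ∈ S`.
Then `P(x,y,z) = ∏ᵢ (1 - (xᵢyᵢ + yᵢzᵢ + zᵢxᵢ)^(q-1))` is nonzero on `S × S × S`
iff `x = y = z`. -/
theorem slice_rank_polynomial_diag (k n j : ℕ) (hk : 1 ≤ k) (hn : 1 ≤ n) (hj : j ≤ n)
    (F : Type*) [Field F] [Fintype F] [DecidableEq F] (hF : Fintype.card F = 3 ^ k)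
    (S : Set (Fin n → F))
    (hzero : ∀ v ∈ S, ((Finset.univ : Finset (Fin n)).filter (fun i => v i = 0)).card = j)
    (hS : ∀ x ∈ S, ∀ y ∈ S, ∀ z ∈ S, x ≠ y → y ≠ z → x ≠ z →
      x * y + y * z + z * x ≠ 0) :
    ∀ x ∈ S, ∀ y ∈ S, ∀ z ∈ S,
      ((∏ i : Fin n, (1 - (x i * y i + y i * z i + z i * x i) ^ (3 ^ k - 1))) ≠ (0 : F)
        ↔ (x = y ∧ y = z)) :=
  slice_rank_polynomial_diag_general k n j F hF S hzero hS
end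

section
/- Let p be an odd prime, q = p^k, n ≥ 1, and let S ⊆ F_q^n be a set such that no p pairwise distinct elements x_1, ..., x_p ∈ S satisfy e_{p-1}(x_1, ..., x_p) = 0 in F_q^n. For P ⊆ {1, ..., n}, let S_P = {v ∈ S : supp(v) = P} where supp(v) is the set of coordinates where v is nonzero, and let S_P'' ⊆ (F_q*)^{|P|} be obtained by restricting each v ∈ S_P to the coordinates in P and inverting each coordinate. Then |S_P''| = |S_P|, and S_P'' contains no p pairwise distinct elements summing to zero in F_q^{|P|}. -/
/-!
Write `S_P''` for the image of `S_P` under `v ↦ (v i)⁻¹` restricted to `P`; this map is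
injective on `S_P`, since a vector of `S_P` vanishes off `P`. If `x_1, …, x_p ∈ S_P` had
`∑ⱼ (x_j i)⁻¹ = 0` for every `i ∈ P`, then multiplying by `∏ⱼ x_j i` would give
`e_{p-1}(x_1 i, …, x_p i) = 0` for `i ∈ P`, while for `i ∉ P` every `x_j i` vanishes and so
does every `(p-1)`-fold product. Hence `e_{p-1}(x_1, …, x_p) = 0`, contradicting the
hypothesis on `S`.
-/

open Finset Function

namespace Finset

theorem sum_powersetCard_prod_eq_zero {ι R : Type*} [CommSemiring R] {k : ℕ} (hk : k ≠ 0)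
    (s : Finset ι) (g : ι → R) (hg : ∀ i ∈ s, g i = 0) :
    ∑ t ∈ powersetCard k s, ∏ j ∈ t, g j = 0 := by
  refine sum_eq_zero fun t ht => ?_
  obtain ⟨hts, hcard⟩ := mem_powersetCard.1 ht
  obtain ⟨j, hj⟩ := card_pos.1 (hcard ▸ Nat.pos_of_ne_zero hk)
  exact prod_eq_zero hj (hg j (hts hj))

variable {ι : Type*} [DecidableEq ι]

theorem powersetCard_card_sub_one_eq_image_erase (s : Finset ι) (hs : s.Nonempty) :
    powersetCard (#s - 1) s = s.image s.erase := by
  ext t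
  simp only [mem_powersetCard, mem_image]
  constructor
  · rintro ⟨hts, hcard⟩
    have : #(s \ t) = 1 := by rw [card_sdiff_of_subset hts, hcard]; have := hs.card_pos; omega
    obtain ⟨a, ha⟩ := card_eq_one.1 this
    refine ⟨a, (mem_sdiff.1 (ha ▸ mem_singleton_self a)).1, ?_⟩
    rw [← sdiff_singleton_eq_erase, ← ha, sdiff_sdiff_eq_self hts]
  · rintro ⟨a, ha, rfl⟩
    exact ⟨erase_subset a s, card_erase_of_mem ha⟩

theorem sum_powersetCard_card_sub_one {M : Type*} [AddCommMonoid M] (s : Finset ι)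
    (hs : s.Nonempty) (f : Finset ι → M) :
    ∑ t ∈ powersetCard (#s - 1) s, f t = ∑ i ∈ s, f (s.erase i) := by
  rw [powersetCard_card_sub_one_eq_image_erase s hs, sum_image s.erase_injOn]

theorem sum_powersetCard_prod_eq_prod_mul_sum_inv {K : Type*} [Semifield K] (s : Finset ι)
    (hs : s.Nonempty) (g : ι → K) (hg : ∀ i ∈ s, g i ≠ 0) :
    ∑ t ∈ powersetCard (#s - 1) s, ∏ j ∈ t, g j = (∏ j ∈ s, g j) * ∑ j ∈ s, (g j)⁻¹ := by
  rw [sum_powersetCard_card_sub_one s hs, mul_sum]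
  refine sum_congr rfl fun i hi => ?_
  rw [eq_mul_inv_iff_mul_eq₀ (hg i hi), prod_erase_mul s g hi]

end Finset

theorem sum_powersetCard_prod_eq_zero_of_sum_inv_eq_zero {ι σ K : Type*} [DecidableEq ι]
    [Field K] (s : Finset ι) (hs : 2 ≤ #s) (x : ι → σ → K) (P : Set σ)
    (hsupp : ∀ j ∈ s, ∀ i, x j i ≠ 0 ↔ i ∈ P) (hinv : ∀ i ∈ P, ∑ j ∈ s, (x j i)⁻¹ = 0) :
    ∑ t ∈ powersetCard (#s - 1) s, ∏ j ∈ t, x j = 0 := by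
  ext i
  simp only [Finset.sum_apply, Finset.prod_apply, Pi.zero_apply]
  by_cases hi : i ∈ P
  · rw [sum_powersetCard_prod_eq_prod_mul_sum_inv s (card_pos.1 (by omega : 0 < #s)) _
      fun j hj => (hsupp j hj i).2 hi, hinv i hi, mul_zero]
  · exact sum_powersetCard_prod_eq_zero (by omega : #s - 1 ≠ 0) s _ fun j hj => not_not.1 <|
      mt (hsupp j hj i).1 hi

theorem injOn_restrict_inv {σ G₀ : Type*} [GroupWithZero G₀] (P : Finset σ) :
    Set.InjOn (fun v : σ → G₀ => fun i : {i // i ∈ P} => (v i.1)⁻¹)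
      {v | ∀ i, v i ≠ 0 ↔ i ∈ P} := by
  intro v hv w hw hvw
  funext i
  by_cases hi : i ∈ P
  · exact inv_injective (congrFun hvw ⟨i, hi⟩)
  · rw [not_not.1 (mt (hv i).1 hi), not_not.1 (mt (hw i).1 hi)]

theorem support_class_reduction_general (p n : ℕ) (hp : p.Prime)
    (F : Type*) [Field F] [DecidableEq F]
    (S : Finset (Fin n → F))
    (hS : ¬ ∃ x : Fin p → (Fin n → F), (∀ j, x j ∈ S) ∧ Function.Injective x ∧
      (∑ c ∈ Finset.powersetCard (p - 1) (Finset.univ : Finset (Fin p)),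
        ∏ j ∈ c, x j) = 0)
    (P : Finset (Fin n)) :
    ((S.filter (fun v => ∀ i, v i ≠ 0 ↔ i ∈ P)).image
        (fun v => fun i : {i // i ∈ P} => (v i.1)⁻¹)).card
      = (S.filter (fun v => ∀ i, v i ≠ 0 ↔ i ∈ P)).card ∧
    ¬ ∃ y : Fin p → ({i // i ∈ P} → F),
      (∀ j, y j ∈ (S.filter (fun v => ∀ i, v i ≠ 0 ↔ i ∈ P)).image
          (fun v => fun i : {i // i ∈ P} => (v i.1)⁻¹)) ∧
      Function.Injective y ∧ (∑ j : Fin p, y j) = 0 := by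
  refine ⟨card_image_of_injOn <| (injOn_restrict_inv P).mono fun v hv => (mem_filter.1 hv).2,
    ?_⟩
  rintro ⟨y, hy, hy_inj, hy_sum⟩
  choose x hxS hxy using fun j => mem_image.1 (hy j)
  have hx_inj : Injective x := fun a b hab => hy_inj (by rw [← hxy a, ← hxy b, hab])
  refine hS ⟨x, fun j => (mem_filter.1 (hxS j)).1, hx_inj, ?_⟩
  have hinv (i : Fin n) (hi : i ∈ P) : ∑ j, (x j i)⁻¹ = 0 := by
    simpa [← hxy] using congrFun hy_sum ⟨i, hi⟩
  simpa using sum_powersetCard_prod_eq_zero_of_sum_inv_eq_zero univ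
    (by simpa using hp.two_le) x (P : Set (Fin n)) (fun j _ => (mem_filter.1 (hxS j)).2) hinv

/-- Key reduction in Theorem 4.4: if no `p` pairwise distinct elements of `S ⊆ F_q^n`
(`q = p^k`, `p` an odd prime) have vanishing `e_{p-1}`, then for each support set `P`,
the set `S_P''` obtained from `S_P = {v ∈ S : supp v = P}` by restricting to the
coordinates in `P` and inverting each coordinate has the same cardinality as `S_P` and
contains no `p` pairwise distinct elements summing to zero. -/
theorem support_class_reduction (p k n : ℕ) (hp : p.Prime) (hodd : Odd p)
    (hk : 0 < k) (hn : 0 < n)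
    (F : Type*) [Field F] [Fintype F] [DecidableEq F] (hF : Fintype.card F = p ^ k)
    (S : Finset (Fin n → F))
    (hS : ¬ ∃ x : Fin p → (Fin n → F), (∀ j, x j ∈ S) ∧ Function.Injective x ∧
      (∑ c ∈ Finset.powersetCard (p - 1) (Finset.univ : Finset (Fin p)),
        ∏ j ∈ c, x j) = 0)
    (P : Finset (Fin n)) :
    ((S.filter (fun v => ∀ i, v i ≠ 0 ↔ i ∈ P)).image
        (fun v => fun i : {i // i ∈ P} => (v i.1)⁻¹)).card
      = (S.filter (fun v => ∀ i, v i ≠ 0 ↔ i ∈ P)).card ∧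
    ¬ ∃ y : Fin p → ({i // i ∈ P} → F),
      (∀ j, y j ∈ (S.filter (fun v => ∀ i, v i ≠ 0 ↔ i ∈ P)).image
          (fun v => fun i : {i // i ∈ P} => (v i.1)⁻¹)) ∧
      Function.Injective y ∧ (∑ j : Fin p, y j) = 0 :=
  support_class_reduction_general p n hp F S hS P
end
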